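/- Let G be a finite connected simple m-regular bipartite graph with m > 2. Then the multisets of eigenvalues of the Laplacians of G and of its line graph L(G), viewed as sets of eigenvalues (i.e., their spectra as sets), coincide completely: every eigenvalue of L is an eigenvalue of L_L and the eigenvalue 2m occurs in both. -/
import Mathlib


open Matrix

/-- `G` is bipartite: the vertices can be split into two classes such that every edge joins
the two classes. -/
def IsBipartite {V : Type*} (G : SimpleGraph V) : Prop :=
  ∃ s : Set V, ∀ v w : V, G.Adj v w → (v ∈ s ↔ w ∉ s)

open Classical in
/-- The adjacency matrix of the line graph of `G`, indexed by the edges of `G`. -/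
noncomputable def lineAdjMatrix {V : Type*} (G : SimpleGraph V) :
    Matrix G.edgeSet G.edgeSet ℝ :=
  Matrix.of fun e f => if G.lineGraph.Adj e f then 1 else 0

/-- The vertex-edge incidence matrix of `G`. -/
noncomputable def incMat {V : Type*} [DecidableEq V] (G : SimpleGraph V) :
    Matrix V G.edgeSet ℝ :=
  Matrix.of fun v e => if v ∈ (e : Sym2 V) then 1 else 0

/-- Shift lemma for eigenvalue equations. -/
lemma shift_eig {α : Type*} [Fintype α] [DecidableEq α] (M : Matrix α α ℝ) (c E : ℝ)
    (x : α → ℝ) :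
    ((c • (1 : Matrix α α ℝ) - M).mulVec x = E • x) ↔ M.mulVec x = (c - E) • x := by
  rw [Matrix.sub_mulVec, Matrix.smul_mulVec, Matrix.one_mulVec, sub_smul]
  constructor <;> intro h
  · rw [← h]; abel
  · rw [h]; abel

/-- SUSY: nonzero eigenvalues of `N Nᵀ` are eigenvalues of `Nᵀ N`. -/
lemma susy {α β : Type*} [Fintype α] [Fintype β]
    (N : Matrix α β ℝ) (lam : ℝ) (hlam : lam ≠ 0) (x : α → ℝ) (hx : x ≠ 0)
    (h : (N * Nᵀ).mulVec x = lam • x) :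
    ∃ y : β → ℝ, y ≠ 0 ∧ (Nᵀ * N).mulVec y = lam • y := by
  have key : N.mulVec (Nᵀ.mulVec x) = lam • x := by
    rw [Matrix.mulVec_mulVec]; exact h
  refine ⟨Nᵀ.mulVec x, ?_, ?_⟩
  · intro h0
    apply hx
    rw [h0, Matrix.mulVec_zero] at key
    rcases smul_eq_zero.mp key.symm with h1 | h1
    · exact absurd h1 hlam
    · exact h1
  · rw [Matrix.mulVec_mulVec, Matrix.mul_assoc,
      ← Matrix.mulVec_mulVec x Nᵀ (N * Nᵀ), h, Matrix.mulVec_smul]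

section counts

variable {V : Type*} [Fintype V] [DecidableEq V] (G : SimpleGraph V)
  [DecidableRel G.Adj] [Fintype G.edgeSet]

lemma count_deg (v : V) :
    ∑ e : G.edgeSet, (if v ∈ (e : Sym2 V) then (1 : ℝ) else 0) = (G.degree v : ℝ) := by
  rw [Finset.sum_boole]
  norm_cast
  rw [← Fintype.card_subtype]
  rw [← SimpleGraph.card_incidenceSet_eq_degree]
  refine Fintype.card_congr ?_
  exact { toFun := fun e => ⟨e.1.1, e.1.2, e.2⟩
          invFun := fun e => ⟨⟨e.1, e.2.1⟩, e.2.2⟩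
          left_inv := fun e => rfl
          right_inv := fun e => rfl }

lemma count_adj {v w : V} (hvw : v ≠ w) :
    ∑ e : G.edgeSet, ((if v ∈ (e : Sym2 V) then (1 : ℝ) else 0) *
        (if w ∈ (e : Sym2 V) then (1 : ℝ) else 0))
      = if G.Adj v w then 1 else 0 := by
  by_cases hadj : G.Adj v w
  · rw [if_pos hadj]
    have he0 : s(v, w) ∈ G.edgeSet := G.mem_edgeSet.mpr hadj
    rw [Finset.sum_eq_single_of_mem (⟨s(v, w), he0⟩ : G.edgeSet) (Finset.mem_univ _)]
    · rw [if_pos (Sym2.mem_mk_left v w), if_pos (Sym2.mem_mk_right v w), mul_one]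
    · intro e _ hne
      by_cases h1 : v ∈ (e : Sym2 V)
      · by_cases h2 : w ∈ (e : Sym2 V)
        · exact absurd (Subtype.ext ((Sym2.mem_and_mem_iff hvw).mp ⟨h1, h2⟩)) hne
        · rw [if_neg h2, mul_zero]
      · rw [if_neg h1, zero_mul]
  · rw [if_neg hadj]
    apply Finset.sum_eq_zero
    intro e _
    by_cases h1 : v ∈ (e : Sym2 V)
    · by_cases h2 : w ∈ (e : Sym2 V)
      · exfalso
        have : (e : Sym2 V) = s(v, w) := (Sym2.mem_and_mem_iff hvw).mp ⟨h1, h2⟩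
        exact hadj (G.mem_edgeSet.mp (this ▸ e.2))
      · rw [if_neg h2, mul_zero]
    · rw [if_neg h1, zero_mul]

lemma count_two (e : G.edgeSet) :
    ∑ v : V, ((if v ∈ (e : Sym2 V) then (1 : ℝ) else 0) *
        (if v ∈ (e : Sym2 V) then (1 : ℝ) else 0)) = 2 := by
  have hsq : ∀ v : V, ((if v ∈ (e : Sym2 V) then (1 : ℝ) else 0) *
      (if v ∈ (e : Sym2 V) then (1 : ℝ) else 0))
      = (if v ∈ (e : Sym2 V) then (1 : ℝ) else 0) := by
    intro v; by_cases h : v ∈ (e : Sym2 V) <;> simp [h]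
  simp only [hsq]
  obtain ⟨s, hs⟩ := e
  induction s using Sym2.ind with
  | _ a b =>
    have hab : a ≠ b := G.ne_of_adj (G.mem_edgeSet.mp hs)
    have hpt : ∀ v : V, (if v ∈ (s(a, b) : Sym2 V) then (1 : ℝ) else 0)
        = (if v = a then (1 : ℝ) else 0) + (if v = b then (1 : ℝ) else 0) := by
      intro v
      by_cases hva : v = a
      · subst hva
        simp [Sym2.mem_iff, hab]
      · by_cases hvb : v = b
        · subst hvb
          simp [Sym2.mem_iff, hva]
        · simp [Sym2.mem_iff, hva, hvb]
    simp only [hpt]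
    rw [Finset.sum_add_distrib, Finset.sum_ite_eq' Finset.univ a fun _ => (1 : ℝ),
      Finset.sum_ite_eq' Finset.univ b fun _ => (1 : ℝ)]
    simp
    norm_num

open Classical in
lemma count_shared {e f : G.edgeSet} (hef : e ≠ f) :
    ∑ v : V, ((if v ∈ (e : Sym2 V) then (1 : ℝ) else 0) *
        (if v ∈ (f : Sym2 V) then (1 : ℝ) else 0))
      = if G.lineGraph.Adj e f then 1 else 0 := by
  by_cases hadj : ∃ v, v ∈ (e : Sym2 V) ∧ v ∈ (f : Sym2 V)
  · obtain ⟨v0, hv0⟩ := hadj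
    have hline : G.lineGraph.Adj e f :=
      SimpleGraph.lineGraph_adj_iff_exists.mpr ⟨hef, v0, hv0⟩
    rw [if_pos hline]
    rw [Finset.sum_eq_single_of_mem v0 (Finset.mem_univ _)]
    · rw [if_pos hv0.1, if_pos hv0.2, mul_one]
    · intro v _ hne
      by_cases h1 : v ∈ (e : Sym2 V)
      · by_cases h2 : v ∈ (f : Sym2 V)
        · exfalso
          apply hef
          apply Subtype.ext
          calc (e : Sym2 V) = s(v, v0) := (Sym2.mem_and_mem_iff hne).mp ⟨h1, hv0.1⟩
            _ = (f : Sym2 V) := ((Sym2.mem_and_mem_iff hne).mp ⟨h2, hv0.2⟩).symm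
        · rw [if_neg h2, mul_zero]
      · rw [if_neg h1, zero_mul]
  · have hline : ¬ G.lineGraph.Adj e f := by
      intro h
      obtain ⟨-, v, hv⟩ := SimpleGraph.lineGraph_adj_iff_exists.mp h
      exact hadj ⟨v, hv⟩
    rw [if_neg hline]
    apply Finset.sum_eq_zero
    intro v _
    by_cases h1 : v ∈ (e : Sym2 V)
    · by_cases h2 : v ∈ (f : Sym2 V)
      · exact absurd ⟨v, h1, h2⟩ hadj
      · rw [if_neg h2, mul_zero]
    · rw [if_neg h1, zero_mul]

open Classical in
lemma incMat_mul_transpose (m : ℕ) (hreg : G.IsRegularOfDegree m) :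
    incMat G * (incMat G)ᵀ = G.adjMatrix ℝ + (m : ℝ) • 1 := by
  ext v w
  simp only [Matrix.mul_apply, incMat, Matrix.transpose_apply, Matrix.of_apply,
    Matrix.add_apply, SimpleGraph.adjMatrix_apply, Matrix.smul_apply, Matrix.one_apply,
    smul_eq_mul]
  by_cases hvw : v = w
  · subst hvw
    have hsq : ∀ e : G.edgeSet, ((if v ∈ (e : Sym2 V) then (1 : ℝ) else 0) *
        (if v ∈ (e : Sym2 V) then (1 : ℝ) else 0))
        = (if v ∈ (e : Sym2 V) then (1 : ℝ) else 0) := by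
      intro e; by_cases h : v ∈ (e : Sym2 V) <;> simp [h]
    simp only [hsq]
    rw [count_deg G v, hreg v]
    simp [G.irrefl]
  · rw [count_adj G hvw, if_neg hvw, mul_zero, add_zero]

open Classical in
lemma transpose_mul_incMat :
    (incMat G)ᵀ * incMat G = lineAdjMatrix G + (2 : ℝ) • 1 := by
  ext e f
  simp only [Matrix.mul_apply, incMat, Matrix.transpose_apply, Matrix.of_apply,
    Matrix.add_apply, lineAdjMatrix, Matrix.smul_apply, Matrix.one_apply, smul_eq_mul]
  by_cases hef : e = f
  · subst hef
    rw [count_two G e]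
    simp [SimpleGraph.irrefl]
  · rw [count_shared G hef, if_neg hef, mul_zero, add_zero]

end counts

/-- Let `G` be a finite connected simple `m`-regular bipartite graph with `m > 2`, with
Laplacian `L = m • I - A`, and let `L_L = 2(m-1) • I_L - A_L` be the Laplacian of the line
graph `L(G)`.  Then the spectra of `L` and `L_L` coincide completely as sets, and `2m` is
an eigenvalue of both. -/
theorem stmt_17 {V : Type*} [Fintype V] [DecidableEq V]
    (G : SimpleGraph V) [DecidableRel G.Adj] [Fintype G.edgeSet]
    (m : ℕ) (hm : 2 < m) (hreg : G.IsRegularOfDegree m)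
    (hconn : G.Connected) (hbip : IsBipartite G)
    (L : Matrix V V ℝ) (hL : L = (m : ℝ) • (1 : Matrix V V ℝ) - G.adjMatrix ℝ)
    (LL : Matrix G.edgeSet G.edgeSet ℝ)
    (hLL : LL = (2 * (m - 1) : ℝ) • (1 : Matrix G.edgeSet G.edgeSet ℝ) - lineAdjMatrix G) :
    (∀ E : ℝ, (∃ x : V → ℝ, x ≠ 0 ∧ L.mulVec x = E • x) ↔
        (∃ y : G.edgeSet → ℝ, y ≠ 0 ∧ LL.mulVec y = E • y)) ∧
      (∃ x : V → ℝ, x ≠ 0 ∧ L.mulVec x = (2 * m : ℝ) • x) ∧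
      (∃ y : G.edgeSet → ℝ, y ≠ 0 ∧ LL.mulVec y = (2 * m : ℝ) • y) := by
  classical
  set N := incMat G with hN
  -- rewrite the two Laplacians in SUSY form
  have hL' : L = (2 * m : ℝ) • (1 : Matrix V V ℝ) - N * Nᵀ := by
    rw [hL, incMat_mul_transpose G m hreg]
    ext v w
    simp only [Matrix.sub_apply, Matrix.smul_apply, Matrix.add_apply, Matrix.one_apply,
      smul_eq_mul]
    ring
  have hLL' : LL = (2 * m : ℝ) • (1 : Matrix G.edgeSet G.edgeSet ℝ) - Nᵀ * N := by
    rw [hLL, transpose_mul_incMat G]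
    ext e f
    simp only [Matrix.sub_apply, Matrix.smul_apply, Matrix.add_apply, Matrix.one_apply,
      smul_eq_mul]
    ring
  -- the bipartition sign vector: eigenvector of L with eigenvalue 2m
  obtain ⟨s, hs⟩ := hbip
  have : Nonempty V := hconn.nonempty
  set x0 : V → ℝ := fun v => if v ∈ s then 1 else -1 with hx0
  have hx0ne : x0 ≠ 0 := by
    intro h
    have v0 : V := Classical.arbitrary V
    have := congrFun h v0
    by_cases hv : v0 ∈ s <;> simp [hx0, hv] at this
  have hx0neighbor : ∀ v w : V, G.Adj v w → x0 w = - x0 v := by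
    intro v w hvw
    by_cases hv : v ∈ s
    · have hw : w ∉ s := (hs v w hvw).mp hv
      simp [hx0, hv, hw]
    · have hw : w ∈ s := by
        by_contra hw
        exact hv ((hs v w hvw).mpr hw)
      simp [hx0, hv, hw]
  have hx0eig : L.mulVec x0 = (2 * m : ℝ) • x0 := by
    funext v
    rw [hL, Matrix.sub_mulVec, Matrix.smul_mulVec, Matrix.one_mulVec]
    have hadjsum : (G.adjMatrix ℝ).mulVec x0 v = ∑ w ∈ G.neighborFinset v, x0 w :=
      SimpleGraph.adjMatrix_mulVec_apply _ _ _
    have hsum : ∑ w ∈ G.neighborFinset v, x0 w = (m : ℝ) * (- x0 v) := by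
      rw [Finset.sum_congr rfl fun w hw =>
        hx0neighbor v w ((SimpleGraph.mem_neighborFinset G v w).mp hw)]
      rw [Finset.sum_const, SimpleGraph.card_neighborFinset_eq_degree, hreg v]
      simp [mul_comm]
    simp only [Pi.sub_apply, Pi.smul_apply, smul_eq_mul]
    rw [hadjsum, hsum]
    ring
  -- kernel vector of N: eigenvector of LL with eigenvalue 2m
  have hcard : Fintype.card V < Fintype.card G.edgeSet := by
    have h2 : ∑ v : V, G.degree v = (Fintype.card V) * m := by
      rw [Finset.sum_congr rfl fun v _ => hreg v, Finset.sum_const, smul_eq_mul,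
        Finset.card_univ]
    have h0 := G.sum_degrees_eq_twice_card_edges
    rw [h2, @SimpleGraph.edgeFinset_card V G G.fintypeEdgeSet] at h0
    have h1 : 2 * Fintype.card G.edgeSet = Fintype.card V * m := by
      rw [show Fintype.card G.edgeSet
          = @Fintype.card G.edgeSet G.fintypeEdgeSet from
          @Fintype.card_congr _ _ _ G.fintypeEdgeSet (Equiv.refl _), ← h0]
    have h4 : 3 * Fintype.card V ≤ Fintype.card V * m :=
      le_trans (by omega) (Nat.mul_le_mul_left _ hm)
    have h5 : 0 < Fintype.card V := Fintype.card_pos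
    omega
  obtain ⟨y0, hy0mem, hy0ne⟩ : ∃ y : G.edgeSet → ℝ, y ∈ LinearMap.ker N.mulVecLin ∧ y ≠ 0 := by
    rw [← Submodule.ne_bot_iff, Ne, LinearMap.ker_eq_bot]
    intro hinj
    have := LinearMap.finrank_le_finrank_of_injective hinj
    rw [Module.finrank_pi ℝ, Module.finrank_pi ℝ] at this
    omega
  have hy0ker : N.mulVec y0 = 0 := hy0mem
  have hy0eig : LL.mulVec y0 = (2 * m : ℝ) • y0 := by
    have hker2 : (Nᵀ * N).mulVec y0 = ((2 * m : ℝ) - (2 * m : ℝ)) • y0 := by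
      rw [← Matrix.mulVec_mulVec, hy0ker, Matrix.mulVec_zero, sub_self, zero_smul]
    rw [hLL']
    exact (shift_eig _ _ _ _).mpr hker2
  refine ⟨?_, ⟨x0, hx0ne, hx0eig⟩, ⟨y0, hy0ne, hy0eig⟩⟩
  intro E
  constructor
  · rintro ⟨x, hxne, hxeig⟩
    rw [hL', shift_eig] at hxeig
    by_cases hE : (2 * m : ℝ) - E = 0
    · have : E = (2 * m : ℝ) := by linarith [sub_eq_zero.mp hE]
      exact ⟨y0, hy0ne, by rw [this]; exact hy0eig⟩
    · obtain ⟨y, hyne, hyeig⟩ := susy N _ hE x hxne hxeig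
      exact ⟨y, hyne, by rw [hLL', shift_eig]; exact hyeig⟩
  · rintro ⟨y, hyne, hyeig⟩
    rw [hLL', shift_eig] at hyeig
    by_cases hE : (2 * m : ℝ) - E = 0
    · have : E = (2 * m : ℝ) := by linarith [sub_eq_zero.mp hE]
      exact ⟨x0, hx0ne, by rw [this]; exact hx0eig⟩
    · have hyeig' : (Nᵀ * Nᵀᵀ).mulVec y = ((2 * m : ℝ) - E) • y := by
        rw [Matrix.transpose_transpose]; exact hyeig
      obtain ⟨x, hxne, hxeig⟩ := susy Nᵀ _ hE y hyne hyeig'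
      rw [Matrix.transpose_transpose] at hxeig
      exact ⟨x, hxne, by rw [hL', shift_eig]; exact hxeig⟩
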